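/- arXiv:0801.4853 — 5 statements merged into one kernel-verified Lean document; each statement's English description precedes it below -/
import Mathlib

section
/- For every μ ∈ ℂ with Re μ > 0, every λ in the closed unit disk, and every z₀ ∈ D, the set V(z₀, λ) = {log f(z₀) : f ∈ F_μ(λ)} is a convex subset of ℂ. -/
open Complex Set Metric

noncomputable section

/-- The open unit disk in `ℂ`. -/
def unitDisk : Set ℂ := Metric.ball (0 : ℂ) 1

/-- `P_f(z) = (2π/μ)·(z f'(z)/f(z)) + (1+z)/(1−z)`. -/
def Pfun (μ : ℂ) (f : ℂ → ℂ) (z : ℂ) : ℂ :=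
  2 * (Real.pi : ℂ) / μ * (z * deriv f z / f z) + (1 + z) / (1 - z)

/-- Membership in the class `F_μ`: analytic, non-vanishing on the disk, `f(0) = 1`,
and `Re P_f > 0` on the disk. -/
def memF (μ : ℂ) (f : ℂ → ℂ) : Prop :=
  AnalyticOnNhd ℂ f unitDisk ∧ (∀ z ∈ unitDisk, f z ≠ 0) ∧ f 0 = 1 ∧
    ∀ z ∈ unitDisk, 0 < (Pfun μ f z).re

/-- Membership in the class `F_μ(λ)`: `f ∈ F_μ` with `f'(0) = (μ/π)(λ − 1)`. -/
def memFlam (μ lam : ℂ) (f : ℂ → ℂ) : Prop :=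
  memF μ f ∧ deriv f 0 = μ / (Real.pi : ℂ) * (lam - 1)

/-- The branch of `log f` vanishing at `0`: `log f(z) = ∫₀^z f'(ζ)/f(ζ) dζ`
(integral over the segment from `0` to `z`). -/
def logf (f : ℂ → ℂ) (z : ℂ) : ℂ :=
  ∫ t in (0:ℝ)..1, deriv f (t * z) / f (t * z) * z

/-- The region of variability `V(z₀, λ) = {log f(z₀) : f ∈ F_μ(λ)}`. -/
def Vset (μ lam z₀ : ℂ) : Set ℂ := {w | ∃ f, memFlam μ lam f ∧ w = logf f z₀}

/-- `δ(w, λ) = (w + λ)/(1 + conj(λ) w)`. -/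
def dl (lam w : ℂ) : ℂ := (w + lam) / (1 + (starRingEnd ℂ) lam * w)

/-- `log H_{a,λ}(z) = (μ/π)·∫₀^z (δ(aζ,λ) − 1)/((1 − δ(aζ,λ)ζ)(1 − ζ)) dζ`
(integral over the segment from `0` to `z`). -/
def Hlog (μ lam a z : ℂ) : ℂ :=
  μ / (Real.pi : ℂ) *
    ∫ t in (0:ℝ)..1,
      (dl lam (a * (t * z)) - 1) /
        ((1 - dl lam (a * (t * z)) * (t * z)) * (1 - t * z)) * z

/-- The function `H_{a,λ}(z) = exp(log H_{a,λ}(z))`. -/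
def Hfun (μ lam a z : ℂ) : ℂ := Complex.exp (Hlog μ lam a z)

/-- `c(z, λ)`. -/
def cfun (z lam : ℂ) : ℂ :=
  ((‖z‖ : ℂ) ^ 2 * ((starRingEnd ℂ) z - lam) * (1 - (starRingEnd ℂ) lam)
      - (1 - lam) * (1 - (starRingEnd ℂ) lam * (starRingEnd ℂ) z)) /
    ((1 - z) * (1 - (‖z‖ : ℂ) ^ 2)
      * (1 + (‖z‖ : ℂ) ^ 2 - 2 * ((lam * z).re : ℂ)))

/-- `r(z, λ)`. -/
def rfun (z lam : ℂ) : ℝ :=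
  (1 - ‖lam‖ ^ 2) * ‖z‖ /
    ((1 - ‖z‖ ^ 2) * (1 + ‖z‖ ^ 2 - 2 * (lam * z).re))

/-- A starlike univalent function on the unit disk: analytic, `φ(0) = 0`, `φ'(0) = 1`,
univalent, and `Re(z φ'(z)/φ(z)) > 0` on the disk. -/
def IsStarlike (φ : ℂ → ℂ) : Prop :=
  AnalyticOnNhd ℂ φ unitDisk ∧ φ 0 = 0 ∧ deriv φ 0 = 1 ∧
    Set.InjOn φ unitDisk ∧
    ∀ z ∈ unitDisk, z ≠ 0 → 0 < (z * deriv φ z / φ z).re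

/-- `G(z) = (μ/π)·∫₀^z e^{iθ}ζ/(1 + (conj(λ)e^{iθ} − λ)ζ − e^{iθ}ζ²)² dζ`
(integral over the segment from `0` to `z`). -/
def Gfun (μ lam : ℂ) (θ : ℝ) (z : ℂ) : ℂ :=
  μ / (Real.pi : ℂ) *
    ∫ t in (0:ℝ)..1,
      Complex.exp (θ * Complex.I) * (t * z) /
        (1 + ((starRingEnd ℂ) lam * Complex.exp (θ * Complex.I) - lam) * (t * z)
          - Complex.exp (θ * Complex.I) * (t * z) ^ 2) ^ 2 * z

end

/-!
If `f, g ∈ F_μ(λ)` and `a, b ≥ 0` with `a + b = 1`, then `h = exp (a log f + b log g)` has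
logarithmic derivative `a f'/f + b g'/g`. Since `a + b = 1`, this gives `P_h = a P_f + b P_g`,
`h'(0) = a f'(0) + b g'(0)` and `log h = a log f + b log g`, so `h ∈ F_μ(λ)` and
`a log f(z₀) + b log g(z₀) = log h(z₀) ∈ V(z₀, λ)`.
-/

lemma ofReal_mul_mem_segment {t : ℝ} (ht : t ∈ Icc (0:ℝ) 1) (z : ℂ) :
    (t : ℂ) * z ∈ segment ℝ 0 z := by
  rw [segment_eq_image]
  exact ⟨t, ht, by simp [Complex.real_smul]⟩

lemma intervalIntegral_ofReal_mul_mul_eq_sub {F q : ℂ → ℂ} {z : ℂ}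
    (hF : ∀ w ∈ segment ℝ 0 z, HasDerivAt F (q w) w) (hq : ContinuousOn q (segment ℝ 0 z)) :
    ∫ t in (0:ℝ)..1, q (t * z) * z = F z - F 0 := by
  have hmaps : MapsTo (fun t : ℝ => (t : ℂ) * z) (uIcc 0 1) (segment ℝ 0 z) := fun t ht =>
    ofReal_mul_mem_segment (by rwa [uIcc_of_le zero_le_one] at ht) z
  have hderiv : ∀ t ∈ uIcc (0:ℝ) 1, HasDerivAt (fun s : ℝ => F (s * z)) (q (t * z) * z) t := by
    intro t ht
    have hmul : HasDerivAt (fun w : ℂ => w * z) z t := by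
      simpa using (hasDerivAt_id (t : ℂ)).mul_const z
    exact ((hF _ (hmaps ht)).comp (t : ℂ) hmul).comp_ofReal
  have hcont : ContinuousOn (fun t : ℝ => q (t * z) * z) (uIcc 0 1) :=
    (hq.comp (by fun_prop) hmaps).mul continuousOn_const
  simpa using intervalIntegral.integral_eq_sub_of_hasDerivAt hderiv hcont.intervalIntegrable

lemma AnalyticOnNhd.differentiableOn_logDeriv {f : ℂ → ℂ} {s : Set ℂ}
    (hf : AnalyticOnNhd ℂ f s) (hne : ∀ z ∈ s, f z ≠ 0) : DifferentiableOn ℂ (logDeriv f) s :=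
  hf.deriv.differentiableOn.div hf.differentiableOn hne

lemma logf_eq_of_hasDerivAt {f u : ℂ → ℂ} (hf : AnalyticOnNhd ℂ f unitDisk)
    (hne : ∀ z ∈ unitDisk, f z ≠ 0) (hu : ∀ z ∈ unitDisk, HasDerivAt u (logDeriv f z) z)
    (hu0 : u 0 = 0) {z : ℂ} (hz : z ∈ unitDisk) : logf f z = u z := by
  have hseg : segment ℝ 0 z ⊆ unitDisk :=
    (convex_ball 0 1).segment_subset (mem_ball_self one_pos) hz
  rw [← sub_zero (u z), ← hu0]
  exact intervalIntegral_ofReal_mul_mul_eq_sub (fun w hw => hu w (hseg hw))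
    ((hf.differentiableOn_logDeriv hne).continuousOn.mono hseg)

lemma logf_zero (f : ℂ → ℂ) : logf f 0 = 0 := by simp [logf]

lemma hasDerivAt_logf {f : ℂ → ℂ} (hf : AnalyticOnNhd ℂ f unitDisk)
    (hne : ∀ z ∈ unitDisk, f z ≠ 0) {z : ℂ} (hz : z ∈ unitDisk) :
    HasDerivAt (logf f) (logDeriv f z) z := by
  obtain ⟨F, hF0, hF⟩ := ((hf.differentiableOn_logDeriv hne).isExactOn_ball).with_val_at 0 0
  have hlogf : logf f =ᶠ[nhds z] F :=
    Filter.eventually_of_mem (isOpen_ball.mem_nhds hz) fun w hw =>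
      logf_eq_of_hasDerivAt hf hne hF hF0 hw
  exact (hF z hz).congr_of_eventuallyEq hlogf

noncomputable def weightedGeomMean (a b : ℝ) (f g : ℂ → ℂ) (z : ℂ) : ℂ :=
  exp (a * logf f z + b * logf g z)

lemma Pfun_eq_of_logDeriv_eq {μ : ℂ} {f g h : ℂ → ℂ} {a b : ℝ} {z : ℂ} (hab : a + b = 1)
    (hh : logDeriv h z = a * logDeriv f z + b * logDeriv g z) :
    Pfun μ h z = a * Pfun μ f z + b * Pfun μ g z := by
  have hab' : (a : ℂ) + b = 1 := mod_cast hab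
  simp only [Pfun, mul_div_assoc, ← logDeriv_apply, hh]
  linear_combination (-(1 + z) / (1 - z)) * hab'

section WeightedGeomMean

variable {μ lam : ℂ} {f g : ℂ → ℂ} {a b : ℝ}

lemma weightedGeomMean_ne_zero {z : ℂ} : weightedGeomMean a b f g z ≠ 0 := exp_ne_zero _

lemma weightedGeomMean_zero : weightedGeomMean a b f g 0 = 1 := by
  simp [weightedGeomMean, logf_zero]

lemma hasDerivAt_weightedGeomMean (hf : AnalyticOnNhd ℂ f unitDisk)
    (hf₀ : ∀ z ∈ unitDisk, f z ≠ 0) (hg : AnalyticOnNhd ℂ g unitDisk)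
    (hg₀ : ∀ z ∈ unitDisk, g z ≠ 0) {z : ℂ} (hz : z ∈ unitDisk) :
    HasDerivAt (weightedGeomMean a b f g)
      (weightedGeomMean a b f g z * (a * logDeriv f z + b * logDeriv g z)) z :=
  (((hasDerivAt_logf hf hf₀ hz).const_mul (a : ℂ)).add
    ((hasDerivAt_logf hg hg₀ hz).const_mul (b : ℂ))).cexp

lemma analyticOnNhd_weightedGeomMean (hf : AnalyticOnNhd ℂ f unitDisk)
    (hf₀ : ∀ z ∈ unitDisk, f z ≠ 0) (hg : AnalyticOnNhd ℂ g unitDisk)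
    (hg₀ : ∀ z ∈ unitDisk, g z ≠ 0) :
    AnalyticOnNhd ℂ (weightedGeomMean a b f g) unitDisk :=
  DifferentiableOn.analyticOnNhd (fun _ hz =>
    (hasDerivAt_weightedGeomMean hf hf₀ hg hg₀ hz).differentiableAt.differentiableWithinAt)
    isOpen_ball

lemma logDeriv_weightedGeomMean (hf : AnalyticOnNhd ℂ f unitDisk)
    (hf₀ : ∀ z ∈ unitDisk, f z ≠ 0) (hg : AnalyticOnNhd ℂ g unitDisk)
    (hg₀ : ∀ z ∈ unitDisk, g z ≠ 0) {z : ℂ} (hz : z ∈ unitDisk) :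
    logDeriv (weightedGeomMean a b f g) z = a * logDeriv f z + b * logDeriv g z := by
  rw [logDeriv_apply, (hasDerivAt_weightedGeomMean hf hf₀ hg hg₀ hz).deriv,
    mul_div_cancel_left₀ _ weightedGeomMean_ne_zero]

lemma logf_weightedGeomMean (hf : AnalyticOnNhd ℂ f unitDisk)
    (hf₀ : ∀ z ∈ unitDisk, f z ≠ 0) (hg : AnalyticOnNhd ℂ g unitDisk)
    (hg₀ : ∀ z ∈ unitDisk, g z ≠ 0) {z : ℂ} (hz : z ∈ unitDisk) :
    logf (weightedGeomMean a b f g) z = a * logf f z + b * logf g z := by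
  refine logf_eq_of_hasDerivAt (u := fun w => a * logf f w + b * logf g w)
    (analyticOnNhd_weightedGeomMean hf hf₀ hg hg₀) (fun _ _ => weightedGeomMean_ne_zero)
    (fun w hw => ?_) (by simp [logf_zero]) hz
  rw [logDeriv_weightedGeomMean hf hf₀ hg hg₀ hw]
  exact ((hasDerivAt_logf hf hf₀ hw).const_mul (a : ℂ)).add
    ((hasDerivAt_logf hg hg₀ hw).const_mul (b : ℂ))

lemma memF_weightedGeomMean (hf : memF μ f) (hg : memF μ g) (ha : 0 ≤ a) (hb : 0 ≤ b)
    (hab : a + b = 1) : memF μ (weightedGeomMean a b f g) := by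
  obtain ⟨hfA, hf₀, -, hfP⟩ := hf
  obtain ⟨hgA, hg₀, -, hgP⟩ := hg
  refine ⟨analyticOnNhd_weightedGeomMean hfA hf₀ hgA hg₀, fun _ _ => weightedGeomMean_ne_zero,
    weightedGeomMean_zero, fun z hz => ?_⟩
  rw [Pfun_eq_of_logDeriv_eq hab (logDeriv_weightedGeomMean hfA hf₀ hgA hg₀ hz)]
  simpa using convex_Ioi (0 : ℝ) (hfP z hz) (hgP z hz) ha hb hab

lemma memFlam_weightedGeomMean (hf : memFlam μ lam f) (hg : memFlam μ lam g) (ha : 0 ≤ a)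
    (hb : 0 ≤ b) (hab : a + b = 1) : memFlam μ lam (weightedGeomMean a b f g) := by
  refine ⟨memF_weightedGeomMean hf.1 hg.1 ha hb hab, ?_⟩
  obtain ⟨⟨hfA, hf₀, hf1, -⟩, hf'⟩ := hf
  obtain ⟨⟨hgA, hg₀, hg1, -⟩, hg'⟩ := hg
  have hab' : (a : ℂ) + b = 1 := mod_cast hab
  have hlog := logDeriv_weightedGeomMean (a := a) (b := b) hfA hf₀ hgA hg₀ (mem_ball_self one_pos)
  simp only [logDeriv_apply, weightedGeomMean_zero, hf1, hg1, div_one, hf', hg'] at hlog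
  rw [hlog, ← add_mul, hab', one_mul]

end WeightedGeomMean

theorem stmt2_general (μ lam z₀ : ℂ)
    (hz₀ : z₀ ∈ unitDisk) :
    Convex ℝ (Vset μ lam z₀) := by
  rintro _ ⟨f, hf, rfl⟩ _ ⟨g, hg, rfl⟩ a b ha hb hab
  refine ⟨weightedGeomMean a b f g, memFlam_weightedGeomMean hf hg ha hb hab, ?_⟩
  simp only [logf_weightedGeomMean hf.1.1 hf.1.2.1 hg.1.1 hg.1.2.1 hz₀, Complex.real_smul]

theorem stmt2 (μ lam z₀ : ℂ) (hμ : 0 < μ.re) (hlam : ‖lam‖ ≤ 1)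
    (hz₀ : z₀ ∈ unitDisk) :
    Convex ℝ (Vset μ lam z₀) :=
  stmt2_general μ lam z₀ hz₀
end

section
/- Let μ ∈ ℂ with Re μ > 0. If |λ| < 1 and z₀ ∈ D \ {0}, then the point (μ/π)·log((1 − z₀)/(1 − λ z₀)) (principal branch) is an interior point of the set V(z₀, λ). -/
open Complex Set Metric

/-!
Perturb the extremal function `((1 - z) / (1 - λz))^(μ/π)` by the factor `exp (u z²)`. Its
`P`-function becomes `(1 + λz) / (1 - λz) + (4π/μ) u z²`, and the first term has real part at
least `(1 - |λ|) / (1 + |λ|)` on the disk, so for small `|u|` the perturbed function stays in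
`F_μ(λ)`; the factor `exp (u z²)` does not change `f'(0)`. Its logarithm at `z₀` is the extremal
value plus `u z₀²`, which sweeps out a disk of radius proportional to `|z₀|²` around that value.
-/

lemma mem_unitDisk_iff {z : ℂ} : z ∈ unitDisk ↔ ‖z‖ < 1 := mem_ball_zero_iff

lemma mul_mem_unitDisk {a z : ℂ} (ha : ‖a‖ ≤ 1) (hz : z ∈ unitDisk) : a * z ∈ unitDisk := by
  rw [mem_unitDisk_iff, norm_mul] at *
  nlinarith [norm_nonneg a, norm_nonneg z]

lemma re_one_sub_pos {w : ℂ} (hw : ‖w‖ < 1) : 0 < (1 - w).re := by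
  simpa using (re_le_norm w).trans_lt hw

lemma one_sub_ne_zero_of_norm_lt_one {w : ℂ} (hw : ‖w‖ < 1) : 1 - w ≠ 0 := fun h => by
  simpa [h] using re_one_sub_pos hw

lemma log_div_of_re_pos {a b : ℂ} (ha : 0 < a.re) (hb : 0 < b.re) :
    log (a / b) = log a - log b := by
  have ha0 : a ≠ 0 := fun h => by simp [h] at ha
  have hb0 : b ≠ 0 := fun h => by simp [h] at hb
  -- both arguments lie in `(-π/2, π/2)`, so their difference is a principal argument
  have harg_a := abs_lt.1 (abs_arg_lt_pi_div_two_iff.2 (Or.inl ha))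
  have harg_b := abs_lt.1 (abs_arg_lt_pi_div_two_iff.2 (Or.inl hb))
  have him : (log a - log b).im = a.arg - b.arg := by simp [log_im]
  rw [← log_exp (x := log a - log b), exp_sub, exp_log ha0, exp_log hb0]
  · rw [him]; linarith [Real.pi_pos]
  · rw [him]; linarith [Real.pi_pos]

lemma le_re_one_add_div_one_sub {w : ℂ} {ρ : ℝ} (hw : ‖w‖ ≤ ρ) (hρ : ρ < 1) :
    (1 - ρ) / (1 + ρ) ≤ ((1 + w) / (1 - w)).re := by
  have hw0 := norm_nonneg w
  have hre : ((1 + w) / (1 - w)).re = (1 - ‖w‖ ^ 2) / ‖1 - w‖ ^ 2 := by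
    rw [div_re, ← add_div, ← normSq_eq_norm_sq, ← normSq_eq_norm_sq]
    congr 1
    simp [normSq_apply]
    ring
  have hden : ‖1 - w‖ ≤ 1 + ρ := by
    calc ‖1 - w‖ ≤ ‖(1 : ℂ)‖ + ‖w‖ := norm_sub_le 1 w
      _ ≤ 1 + ρ := by simpa using hw
  calc (1 - ρ) / (1 + ρ) = (1 - ρ ^ 2) / (1 + ρ) ^ 2 := by
        field_simp [show (1 + ρ) ≠ 0 by linarith]
        ring
    _ ≤ (1 - ‖w‖ ^ 2) / ‖1 - w‖ ^ 2 := by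
        apply div_le_div₀ (by nlinarith) (by nlinarith)
          (pow_pos (norm_pos_iff.2 (one_sub_ne_zero_of_norm_lt_one (hw.trans_lt hρ))) 2)
          (pow_le_pow_left₀ (norm_nonneg _) hden 2)
    _ = ((1 + w) / (1 - w)).re := hre.symm

lemma logf_exp_comp {h : ℂ → ℂ} (hh : DifferentiableOn ℂ h unitDisk) {z₀ : ℂ}
    (hz₀ : z₀ ∈ unitDisk) : logf (fun z => exp (h z)) z₀ = h z₀ - h 0 := by
  have hseg : ∀ t ∈ uIcc (0 : ℝ) 1, (t : ℂ) * z₀ ∈ unitDisk := fun t ht => by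
    rw [uIcc_of_le zero_le_one] at ht
    exact mul_mem_unitDisk (by simpa [abs_of_nonneg ht.1] using ht.2) hz₀
  have hdiff : ∀ z ∈ unitDisk, DifferentiableAt ℂ h z := fun z hz =>
    hh.differentiableAt (isOpen_ball.mem_nhds hz)
  have hderiv : ∀ t ∈ uIcc (0 : ℝ) 1,
      HasDerivAt (fun s : ℝ => h (s * z₀)) (deriv h (t * z₀) * z₀) t := fun t ht => by
    simpa using ((hdiff _ (hseg t ht)).hasDerivAt.comp (t : ℂ)
      ((hasDerivAt_id (t : ℂ)).mul_const z₀)).comp_ofReal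
  have hcont : ContinuousOn (fun t : ℝ => deriv h (t * z₀) * z₀) (uIcc 0 1) :=
    ((hh.analyticOnNhd isOpen_ball).deriv.continuousOn.comp (by fun_prop) hseg).mul
      continuousOn_const
  calc logf (fun z => exp (h z)) z₀ = ∫ t in (0 : ℝ)..1, deriv h (t * z₀) * z₀ := by
        refine intervalIntegral.integral_congr fun t ht => ?_
        simp only [(hdiff _ (hseg t ht)).hasDerivAt.cexp.deriv,
          mul_div_cancel_left₀ _ (exp_ne_zero _)]
    _ = h z₀ - h 0 := by
        rw [intervalIntegral.integral_eq_sub_of_hasDerivAt hderiv hcont.intervalIntegrable]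
        simp

lemma Pfun_exp_comp (μ : ℂ) {h : ℂ → ℂ} {z : ℂ} (hh : DifferentiableAt ℂ h z) :
    Pfun μ (fun z => exp (h z)) z
      = 2 * (Real.pi : ℂ) / μ * (z * deriv h z) + (1 + z) / (1 - z) := by
  rw [Pfun, hh.hasDerivAt.cexp.deriv, ← mul_assoc, mul_right_comm z,
    mul_div_cancel_right₀ _ (exp_ne_zero _)]

noncomputable def perturbedExtremalLog (μ lam u z : ℂ) : ℂ :=
  μ / Real.pi * (log (1 - z) - log (1 - lam * z)) + u * z ^ 2

section PerturbedExtremal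

variable {μ lam u z : ℂ}

lemma hasDerivAt_perturbedExtremalLog (hlam : ‖lam‖ < 1) (hz : z ∈ unitDisk) :
    HasDerivAt (perturbedExtremalLog μ lam u)
      (μ / Real.pi * (lam / (1 - lam * z) - 1 / (1 - z)) + 2 * u * z) z := by
  have h₁ := ((hasDerivAt_id z).const_sub 1).clog
    (mem_slitPlane_iff.2 (Or.inl (re_one_sub_pos (mem_unitDisk_iff.1 hz))))
  have h₂ := (((hasDerivAt_id z).const_mul lam).const_sub 1).clog
    (mem_slitPlane_iff.2 (Or.inl (re_one_sub_pos (mem_unitDisk_iff.1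
      (mul_mem_unitDisk hlam.le hz)))))
  refine (((h₁.sub h₂).const_mul (μ / Real.pi)).add
    ((hasDerivAt_pow 2 z).const_mul u)).congr_deriv ?_
  simp only [id, mul_one, Nat.cast_ofNat, Nat.add_one_sub_one, pow_one]
  ring

lemma differentiableOn_perturbedExtremalLog (hlam : ‖lam‖ < 1) :
    DifferentiableOn ℂ (perturbedExtremalLog μ lam u) unitDisk := fun _ hz =>
  (hasDerivAt_perturbedExtremalLog hlam hz).differentiableAt.differentiableWithinAt

lemma Pfun_exp_perturbedExtremalLog (hμ : μ ≠ 0) (hlam : ‖lam‖ < 1) (hz : z ∈ unitDisk) :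
    Pfun μ (fun z => exp (perturbedExtremalLog μ lam u z)) z
      = (1 + lam * z) / (1 - lam * z) + 4 * Real.pi / μ * u * z ^ 2 := by
  have hd := hasDerivAt_perturbedExtremalLog (u := u) (μ := μ) hlam hz
  have h₁ := one_sub_ne_zero_of_norm_lt_one (mem_unitDisk_iff.1 hz)
  have h₂ := one_sub_ne_zero_of_norm_lt_one (mem_unitDisk_iff.1 (mul_mem_unitDisk hlam.le hz))
  rw [mul_comm] at h₂
  have hπ : (Real.pi : ℂ) ≠ 0 := ofReal_ne_zero.2 Real.pi_ne_zero
  rw [Pfun_exp_comp μ hd.differentiableAt, hd.deriv]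
  field_simp
  ring

lemma re_Pfun_exp_perturbedExtremalLog_pos (hμ : μ ≠ 0) (hlam : ‖lam‖ < 1)
    (hu : ‖u‖ < (1 - ‖lam‖) / (1 + ‖lam‖) * ‖μ‖ / (4 * Real.pi)) (hz : z ∈ unitDisk) :
    0 < (Pfun μ (fun z => exp (perturbedExtremalLog μ lam u z)) z).re := by
  have hz' := mem_unitDisk_iff.1 hz
  have hcayley := le_re_one_add_div_one_sub (w := lam * z) (ρ := ‖lam‖)
    (by rw [norm_mul]; nlinarith [norm_nonneg lam, norm_nonneg z]) hlam
  have hsmall : ‖4 * (Real.pi : ℂ) / μ * u * z ^ 2‖ < (1 - ‖lam‖) / (1 + ‖lam‖) := by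
    have hπ := Real.pi_pos
    rw [norm_mul, norm_mul, norm_div, norm_mul, norm_pow, norm_real,
      Real.norm_of_nonneg hπ.le, RCLike.norm_ofNat]
    rw [lt_div_iff₀ (by positivity)] at hu
    calc 4 * Real.pi / ‖μ‖ * ‖u‖ * ‖z‖ ^ 2 ≤ 4 * Real.pi / ‖μ‖ * ‖u‖ :=
          mul_le_of_le_one_right (by positivity) (by nlinarith [norm_nonneg z])
      _ < (1 - ‖lam‖) / (1 + ‖lam‖) := by
          rw [div_mul_eq_mul_div, div_lt_iff₀ (norm_pos_iff.2 hμ)]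
          linarith
  rw [Pfun_exp_perturbedExtremalLog hμ hlam hz, add_re]
  linarith [neg_abs_le (4 * (Real.pi : ℂ) / μ * u * z ^ 2).re,
    abs_re_le_norm (4 * (Real.pi : ℂ) / μ * u * z ^ 2)]

lemma memFlam_exp_perturbedExtremalLog (hμ : μ ≠ 0) (hlam : ‖lam‖ < 1)
    (hu : ‖u‖ < (1 - ‖lam‖) / (1 + ‖lam‖) * ‖μ‖ / (4 * Real.pi)) :
    memFlam μ lam (fun z => exp (perturbedExtremalLog μ lam u z)) := by
  have hdiff := differentiableOn_perturbedExtremalLog (μ := μ) (u := u) hlam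
  have h0 : (0 : ℂ) ∈ unitDisk := mem_ball_self one_pos
  refine ⟨⟨hdiff.cexp.analyticOnNhd isOpen_ball, fun _ _ => exp_ne_zero _,
    by simp [perturbedExtremalLog],
    fun z hz => re_Pfun_exp_perturbedExtremalLog_pos hμ hlam hu hz⟩, ?_⟩
  rw [(hasDerivAt_perturbedExtremalLog hlam h0).cexp.deriv]
  simp [perturbedExtremalLog]

end PerturbedExtremal

theorem stmt4 (μ lam z₀ : ℂ) (hμ : 0 < μ.re) (hlam : ‖lam‖ < 1)
    (hz₀ : z₀ ∈ unitDisk) (hz₀0 : z₀ ≠ 0) :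
    μ / (Real.pi : ℂ) * Complex.log ((1 - z₀) / (1 - lam * z₀)) ∈
      interior (Vset μ lam z₀) := by
  have hμ0 : μ ≠ 0 := by rintro rfl; simp at hμ
  set w₀ := perturbedExtremalLog μ lam 0 z₀
  have hw₀ : μ / (Real.pi : ℂ) * log ((1 - z₀) / (1 - lam * z₀)) = w₀ := by
    rw [log_div_of_re_pos (re_one_sub_pos (mem_unitDisk_iff.1 hz₀))
      (re_one_sub_pos (mem_unitDisk_iff.1 (mul_mem_unitDisk hlam.le hz₀)))]
    simp [w₀, perturbedExtremalLog]
  set r := (1 - ‖lam‖) / (1 + ‖lam‖) * ‖μ‖ / (4 * Real.pi)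
  have hr : 0 < r := by
    have := norm_pos_iff.2 hμ0
    have : 0 < 1 - ‖lam‖ := by linarith
    positivity
  rw [hw₀, mem_interior_iff_mem_nhds, Metric.mem_nhds_iff]
  refine ⟨r * ‖z₀‖ ^ 2, by positivity, fun w hw => ?_⟩
  set u := (w - w₀) / z₀ ^ 2
  have hu : ‖u‖ < r := by
    rw [norm_div, norm_pow, div_lt_iff₀ (by positivity)]
    simpa [dist_eq] using hw
  refine ⟨_, memFlam_exp_perturbedExtremalLog hμ0 hlam hu, ?_⟩
  have hperturb : perturbedExtremalLog μ lam u z₀ = w₀ + u * z₀ ^ 2 := by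
    simp [w₀, perturbedExtremalLog]
  rw [logf_exp_comp (differentiableOn_perturbedExtremalLog hlam) hz₀, hperturb,
    div_mul_cancel₀ _ (pow_ne_zero 2 hz₀0)]
  simp [perturbedExtremalLog]
end

section
/- Let μ ∈ ℂ with Re μ > 0 and |λ| < 1. For every f ∈ F_μ(λ) and every z ∈ D, |f'(z)/f(z) − (μ/π)·c(z,λ)| ≤ (|μ|/π)·r(z,λ), where c(z,λ) = (|z|²(conj(z) − λ)(1 − conj(λ)) − (1 − λ)(1 − conj(λ)·conj(z))) / ((1 − z)(1 − |z|²)(1 + |z|² − 2·Re(λz))) and r(z,λ) = (1 − |λ|²)|z| / ((1 − |z|²)(1 + |z|² − 2·Re(λz))). -/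
open Complex Set Metric

open ComplexConjugate

/-! Put `P = Pfun μ f`. Since `Re P > 0`, `P(0) = 1` and `P'(0) = 2λ`, the Cayley transform
`(P - 1)/(P + 1)` is a Schwarz function `z ω(z)` with `ω(0) = λ` and `|ω| ≤ 1`, and Schwarz's
lemma applied to the Möbius transform of `ω` that sends `λ` to `0` confines `w = ω(z)` to the
disk `|w - λ| ≤ |z| |1 - λ̄ w|`. Solving `P(z) = (1 + z w)/(1 - z w)` for the logarithmic
derivative gives `f'/f = (μ/π)(w - 1)/((1 - z w)(1 - z))`, and this Möbius map sends that disk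
onto the disk with center `c(z, λ)` and radius `r(z, λ)`; the last step is an explicit
identity between squared norms. -/

lemma one_sub_mul_ne_zero_of_norm_lt_one {z w : ℂ} (hz : ‖z‖ < 1) (hw : ‖w‖ ≤ 1) :
    1 - z * w ≠ 0 := by
  rw [sub_ne_zero]
  refine fun h => (norm_mul_le z w).not_gt ?_
  rw [← h, norm_one]
  nlinarith [norm_nonneg z, norm_nonneg w]

lemma one_sub_ne_zero_of_norm_lt_one_s7 {z : ℂ} (hz : ‖z‖ < 1) : 1 - z ≠ 0 := by
  simpa using one_sub_mul_ne_zero_of_norm_lt_one hz norm_one.le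

lemma sq_norm_one_sub_conj_mul_sub_sq_norm_sub (a w : ℂ) :
    ‖1 - conj a * w‖ ^ 2 - ‖w - a‖ ^ 2 = (1 - ‖a‖ ^ 2) * (1 - ‖w‖ ^ 2) := by
  apply ofReal_injective
  push_cast
  simp only [← mul_conj', map_sub, map_mul, map_one, conj_conj]
  ring

lemma norm_sub_le_norm_one_sub_conj_mul {a w : ℂ} (ha : ‖a‖ ≤ 1) (hw : ‖w‖ ≤ 1) :
    ‖w - a‖ ≤ ‖1 - conj a * w‖ := by
  have h := sq_norm_one_sub_conj_mul_sub_sq_norm_sub a w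
  have hprod : 0 ≤ (1 - ‖a‖ ^ 2) * (1 - ‖w‖ ^ 2) :=
    mul_nonneg (by nlinarith [norm_nonneg a]) (by nlinarith [norm_nonneg w])
  exact (pow_le_pow_iff_left₀ (norm_nonneg _) (norm_nonneg _) two_ne_zero).mp (by linarith)

lemma one_add_sq_norm_sub_two_re_mul_pos {a z : ℂ} (ha : ‖a‖ ≤ 1) (hz : ‖z‖ < 1) :
    0 < 1 + ‖z‖ ^ 2 - 2 * (a * z).re := by
  have hre : (a * z).re ≤ ‖z‖ :=
    (re_le_norm _).trans (by rw [norm_mul]; nlinarith [norm_nonneg z])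
  nlinarith [norm_nonneg z]

lemma div_sub_cfun_eq {z a w : ℂ} (h1z : 1 - z ≠ 0) (hzw : 1 - z * w ≠ 0)
    (hE : (1 - ‖z‖ ^ 2) * (1 + ‖z‖ ^ 2 - 2 * (a * z).re) ≠ 0) :
    (w - 1) / ((1 - z * w) * (1 - z)) - cfun z a =
      ((1 - conj a * conj z) * (w - a) + ‖z‖ ^ 2 * (a - conj z) * (1 - conj a * w)) /
        ((1 - z * w) * ((1 - ‖z‖ ^ 2) * (1 + ‖z‖ ^ 2 - 2 * (a * z).re) : ℝ)) := by
  have hE' : ((1 - ‖z‖ ^ 2) * (1 + ‖z‖ ^ 2 - 2 * (a * z).re) : ℂ) ≠ 0 := by exact_mod_cast hE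
  push_cast at hE' ⊢
  have hcden : (1 - z) * (1 - (‖z‖ : ℂ) ^ 2) * (1 + (‖z‖ : ℂ) ^ 2 - 2 * ((a * z).re : ℂ)) ≠ 0 := by
    simpa [mul_assoc] using mul_ne_zero h1z hE'
  rw [cfun, div_sub_div _ _ (mul_ne_zero hzw h1z) hcden,
    div_eq_div_iff (mul_ne_zero (mul_ne_zero hzw h1z) hcden) (mul_ne_zero hzw hE')]
  simp only [← mul_conj', re_eq_add_conj, map_mul]
  ring

lemma sq_norm_div_sub_cfun_numerator (z a w : ℂ) :
    ‖(1 - conj a * conj z) * (w - a) + (‖z‖ ^ 2 : ℂ) * (a - conj z) * (1 - conj a * w)‖ ^ 2 +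
        (1 - ‖z‖ ^ 2) * (1 + ‖z‖ ^ 2 - 2 * (a * z).re) *
          (‖z‖ ^ 2 * ‖1 - conj a * w‖ ^ 2 - ‖w - a‖ ^ 2) =
      (1 - ‖a‖ ^ 2) ^ 2 * ‖z‖ ^ 2 * ‖1 - z * w‖ ^ 2 := by
  apply ofReal_injective
  push_cast
  simp only [← mul_conj', re_eq_add_conj, map_sub, map_add, map_mul, map_one, conj_conj]
  ring

lemma norm_div_sub_cfun_le_rfun {z a w : ℂ} (hz : ‖z‖ < 1) (ha : ‖a‖ ≤ 1) (hw : ‖w‖ ≤ 1)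
    (hwa : ‖w - a‖ ≤ ‖z‖ * ‖1 - conj a * w‖) :
    ‖(w - 1) / ((1 - z * w) * (1 - z)) - cfun z a‖ ≤ rfun z a := by
  set E := (1 - ‖z‖ ^ 2) * (1 + ‖z‖ ^ 2 - 2 * (a * z).re) with hE
  set G := (1 - conj a * conj z) * (w - a) + (‖z‖ ^ 2 : ℂ) * (a - conj z) * (1 - conj a * w)
  have hEpos : 0 < E :=
    mul_pos (by nlinarith [norm_nonneg z]) (one_add_sq_norm_sub_two_re_mul_pos ha hz)
  have hzw := one_sub_mul_ne_zero_of_norm_lt_one hz hw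
  have h1z := one_sub_ne_zero_of_norm_lt_one_s7 hz
  have hR : 0 ≤ (1 - ‖a‖ ^ 2) * ‖z‖ * ‖1 - z * w‖ :=
    mul_nonneg (mul_nonneg (by nlinarith [norm_nonneg a]) (norm_nonneg z)) (norm_nonneg _)
  have hG : ‖G‖ ≤ (1 - ‖a‖ ^ 2) * ‖z‖ * ‖1 - z * w‖ := by
    have hdisk : 0 ≤ ‖z‖ ^ 2 * ‖1 - conj a * w‖ ^ 2 - ‖w - a‖ ^ 2 := by
      nlinarith [norm_nonneg (w - a), mul_nonneg (norm_nonneg z) (norm_nonneg (1 - conj a * w))]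
    refine (pow_le_pow_iff_left₀ (norm_nonneg _) hR two_ne_zero).mp ?_
    nlinarith [sq_norm_div_sub_cfun_numerator z a w, mul_nonneg hEpos.le hdisk]
  rw [div_sub_cfun_eq h1z hzw hEpos.ne', norm_div, norm_mul, norm_real,
    Real.norm_of_nonneg hEpos.le, rfun, ← hE, div_le_div_iff₀ (by positivity) hEpos]
  calc ‖G‖ * E ≤ (1 - ‖a‖ ^ 2) * ‖z‖ * ‖1 - z * w‖ * E := by gcongr
    _ = (1 - ‖a‖ ^ 2) * ‖z‖ * (‖1 - z * w‖ * E) := by ring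

lemma norm_sub_le_mul_norm_one_sub_conj_mul {ω : ℂ → ℂ} {a z : ℂ}
    (hd : DifferentiableOn ℂ ω (ball 0 1)) (hmaps : MapsTo ω (ball 0 1) (closedBall 0 1))
    (h0 : ω 0 = a) (ha : ‖a‖ < 1) (hz : ‖z‖ < 1) :
    ‖ω z - a‖ ≤ ‖z‖ * ‖1 - conj a * ω z‖ := by
  have hden : ∀ x ∈ ball (0 : ℂ) 1, 1 - conj a * ω x ≠ 0 := fun x hx =>
    one_sub_mul_ne_zero_of_norm_lt_one (by rwa [norm_conj])
      (mem_closedBall_zero_iff.mp (hmaps hx))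
  have hschwarz := norm_le_norm_of_mapsTo_ball (f := fun x => (ω x - a) / (1 - conj a * ω x))
    ((hd.sub_const a).div ((differentiableOn_const 1).sub (hd.const_mul _)) hden)
    (fun x hx => mem_closedBall_zero_iff.mpr <| by
      rw [norm_div, div_le_one₀ (norm_pos_iff.mpr (hden x hx))]
      exact norm_sub_le_norm_one_sub_conj_mul ha.le (mem_closedBall_zero_iff.mp (hmaps hx)))
    (by simp [h0]) hz
  rwa [norm_div, div_le_iff₀ (norm_pos_iff.mpr (hden z (mem_ball_zero_iff.mpr hz)))] at hschwarz

lemma norm_sub_one_lt_norm_add_one {q : ℂ} (hq : 0 < q.re) : ‖q - 1‖ < ‖q + 1‖ := by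
  rw [← sq_lt_sq₀ (norm_nonneg _) (norm_nonneg _), Complex.sq_norm, Complex.sq_norm,
    normSq_apply, normSq_apply]
  simp only [sub_re, add_re, sub_im, add_im, one_re, one_im]
  nlinarith

lemma exists_norm_sub_le_and_mul_one_sub_eq_of_re_pos {p : ℂ → ℂ} {a z : ℂ}
    (hd : DifferentiableOn ℂ p (ball 0 1)) (hre : ∀ x ∈ ball (0 : ℂ) 1, 0 < (p x).re)
    (h0 : p 0 = 1) (hderiv : HasDerivAt p (2 * a) 0) (ha : ‖a‖ < 1) (hz : ‖z‖ < 1) :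
    ∃ w, ‖w‖ ≤ 1 ∧ ‖w - a‖ ≤ ‖z‖ * ‖1 - conj a * w‖ ∧ p z * (1 - z * w) = 1 + z * w := by
  have hne : ∀ x ∈ ball (0 : ℂ) 1, p x + 1 ≠ 0 := fun x hx =>
    norm_pos_iff.mp ((norm_nonneg _).trans_lt (norm_sub_one_lt_norm_add_one (hre x hx)))
  set ψ := fun x => (p x - 1) / (p x + 1)
  have hψ0 : ψ 0 = 0 := by simp [ψ, h0]
  have hψd : DifferentiableOn ℂ ψ (ball 0 1) :=
    (hd.sub_const 1).div (hd.add_const 1) hne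
  have hψmaps : MapsTo ψ (ball 0 1) (closedBall (ψ 0) 1) := fun x hx => by
    rw [hψ0, mem_closedBall_zero_iff, norm_div]
    exact ((div_lt_one (norm_pos_iff.mpr (hne x hx))).mpr
      (norm_sub_one_lt_norm_add_one (hre x hx))).le
  set ω := dslope ψ 0
  have hω0 : ω 0 = a := by
    have hψ' : HasDerivAt ψ _ 0 :=
      (hderiv.sub_const 1).div (hderiv.add_const 1) (hne 0 (mem_ball_self one_pos))
    rw [show ω 0 = deriv ψ 0 from dslope_same ψ 0, hψ'.deriv, h0]
    ring
  have hωmaps : MapsTo ω (ball 0 1) (closedBall 0 1) := fun x hx =>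
    mem_closedBall_zero_iff.mpr (by simpa using norm_dslope_le_div_of_mapsTo_ball hψd hψmaps hx)
  have hzball : z ∈ ball (0 : ℂ) 1 := mem_ball_zero_iff.mpr hz
  have hωd : DifferentiableOn ℂ ω (ball 0 1) :=
    (differentiableOn_dslope (ball_mem_nhds 0 one_pos)).mpr hψd
  refine ⟨ω z, mem_closedBall_zero_iff.mp (hωmaps hzball),
    norm_sub_le_mul_norm_one_sub_conj_mul hωd hωmaps hω0 ha hz, ?_⟩
  have hψz : ψ z = z * ω z := by simpa [hψ0] using (sub_smul_dslope ψ 0 z).symm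
  have := hne z hzball
  simp only [ψ] at hψz
  field_simp at hψz
  linear_combination hψz

lemma Pfun_zero (μ : ℂ) (f : ℂ → ℂ) : Pfun μ f 0 = 1 := by
  simp [Pfun]

lemma differentiableOn_Pfun {μ : ℂ} {f : ℂ → ℂ} (hfa : AnalyticOnNhd ℂ f unitDisk)
    (hfne : ∀ z ∈ unitDisk, f z ≠ 0) : DifferentiableOn ℂ (Pfun μ f) unitDisk :=
  (((differentiableOn_id.mul hfa.deriv.differentiableOn).div hfa.differentiableOn
    hfne).const_mul _).add <|
    ((differentiableOn_const 1).add differentiableOn_id).div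
      ((differentiableOn_const 1).sub differentiableOn_id) fun _ hz =>
        one_sub_ne_zero_of_norm_lt_one_s7 (mem_ball_zero_iff.mp hz)

lemma hasDerivAt_Pfun_zero {μ a : ℂ} {f : ℂ → ℂ} (hμ : μ ≠ 0) (hfa : AnalyticAt ℂ f 0)
    (hf0 : f 0 = 1) (hf'0 : deriv f 0 = μ / (Real.pi : ℂ) * (a - 1)) :
    HasDerivAt (Pfun μ f) (2 * a) 0 := by
  have hπ : (Real.pi : ℂ) ≠ 0 := ofReal_ne_zero.mpr Real.pi_ne_zero
  have hlog := ((hasDerivAt_id' 0).mul hfa.deriv.differentiableAt.hasDerivAt).div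
    hfa.differentiableAt.hasDerivAt (by rw [hf0]; exact one_ne_zero)
  have hmob := ((hasDerivAt_const (0 : ℂ) (1 : ℂ)).add (hasDerivAt_id' 0)).div
    ((hasDerivAt_const (0 : ℂ) (1 : ℂ)).sub (hasDerivAt_id' 0)) (by norm_num)
  refine ((hlog.const_mul (2 * (Real.pi : ℂ) / μ)).add hmob).congr_deriv ?_
  simp only [Pi.mul_apply, Pi.add_apply, Pi.sub_apply, hf0, hf'0]
  field_simp
  ring

lemma deriv_div_eq_of_Pfun_mul_eq {μ z w : ℂ} {f : ℂ → ℂ} (hμ : μ ≠ 0) (hz : z ≠ 0)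
    (h1z : 1 - z ≠ 0) (hzw : 1 - z * w ≠ 0) (h : Pfun μ f z * (1 - z * w) = 1 + z * w) :
    deriv f z / f z = μ / (Real.pi : ℂ) * ((w - 1) / ((1 - z * w) * (1 - z))) := by
  have hπ : (Real.pi : ℂ) ≠ 0 := ofReal_ne_zero.mpr Real.pi_ne_zero
  rw [Pfun, mul_div_assoc] at h
  field_simp at h ⊢
  apply mul_left_cancel₀ (mul_ne_zero two_ne_zero hz)
  linear_combination h

theorem stmt7 (μ lam : ℂ) (hμ : 0 < μ.re) (hlam : ‖lam‖ < 1)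
    (f : ℂ → ℂ) (hf : memFlam μ lam f) (z : ℂ) (hz : z ∈ unitDisk) :
    ‖deriv f z / f z - μ / (Real.pi : ℂ) * cfun z lam‖ ≤
      ‖μ‖ / Real.pi * rfun z lam := by
  obtain ⟨⟨hfa, hfne, hf0, hre⟩, hf'0⟩ := hf
  have hμ0 : μ ≠ 0 := by rintro rfl; simp at hμ
  have hz1 : ‖z‖ < 1 := mem_ball_zero_iff.mp hz
  obtain ⟨w, hw1, hwa, hPw⟩ := exists_norm_sub_le_and_mul_one_sub_eq_of_re_pos
    (differentiableOn_Pfun hfa hfne) hre (Pfun_zero μ f)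
    (hasDerivAt_Pfun_zero hμ0 (hfa 0 (mem_ball_self one_pos)) hf0 hf'0) hlam hz1
  have hlogderiv :
      deriv f z / f z = μ / (Real.pi : ℂ) * ((w - 1) / ((1 - z * w) * (1 - z))) := by
    rcases eq_or_ne z 0 with rfl | hz0
    · obtain rfl : w = lam := by simpa [sub_eq_zero] using hwa
      simp [hf'0, hf0]
    · exact deriv_div_eq_of_Pfun_mul_eq hμ0 hz0
        (one_sub_ne_zero_of_norm_lt_one_s7 hz1)
        (one_sub_mul_ne_zero_of_norm_lt_one hz1 hw1) hPw
  rw [hlogderiv, ← mul_sub, norm_mul, norm_div, norm_real, Real.norm_of_nonneg Real.pi_pos.le]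
  gcongr
  exact norm_div_sub_cfun_le_rfun hz1 hlam.le hw1 hwa
end

section
/- Let μ ∈ ℂ with Re μ > 0, |λ| < 1, f ∈ F_μ(λ), and z ∈ D \ {0}. Then equality |f'(z)/f(z) − (μ/π)·c(z,λ)| = (|μ|/π)·r(z,λ) holds if and only if there exists θ ∈ ℝ such that f = H_{e^{iθ},λ} on D, where c(z,λ) = (|z|²(conj(z) − λ)(1 − conj(λ)) − (1 − λ)(1 − conj(λ)·conj(z))) / ((1 − z)(1 − |z|²)(1 + |z|² − 2·Re(λz))) and r(z,λ) = (1 − |λ|²)|z| / ((1 − |z|²)(1 + |z|² − 2·Re(λz))). -/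
open Complex Set Metric

/-!
For `f ∈ F_μ(λ)` the Cayley transform `(P_f - 1)/(P_f + 1)` is `ζ ω(ζ)` for a holomorphic `ω`
with `ω(0) = λ` and `|ω| ≤ 1`, and `f'/f = (μ/π) (ω - 1)/((1 - ω ζ)(1 - ζ))`. For `|w| ≤ 1`,
`|(w - 1)/((1 - w z)(1 - z)) - c(z, λ)|² - r(z, λ)²` is a positive multiple of
`|w - λ|² - |z|² |1 - conj(λ) w|²`, so equality holds exactly when `ψ = δ(ω, -λ)`, a self-map of
the disk fixing `0`, satisfies `|ψ(z)| = |z|`. By the equality case of the Schwarz lemma this means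
`ψ(ζ) = e^{iθ} ζ`, i.e. `ω(ζ) = δ(e^{iθ} ζ, λ)`, and integrating `f'/f` gives `f = H_{e^{iθ},λ}`.
-/

open ComplexConjugate Filter intervalIntegral
open scoped Real

lemma one_sub_ne_zero_of_norm_lt_one_s8 {x : ℂ} (hx : ‖x‖ < 1) : 1 - x ≠ 0 := by
  rw [sub_ne_zero]
  rintro rfl
  simp at hx

lemma one_sub_mul_ne_zero {x y : ℂ} (hx : ‖x‖ ≤ 1) (hy : ‖y‖ < 1) : 1 - x * y ≠ 0 :=
  one_sub_ne_zero_of_norm_lt_one_s8 <| by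
    rw [norm_mul]
    exact (mul_le_of_le_one_left (norm_nonneg y) hx).trans_lt hy

lemma norm_sub_one_div_add_one_lt_one {p : ℂ} (hp : 0 < p.re) : ‖(p - 1) / (p + 1)‖ < 1 := by
  have hp1 : 0 < ‖p + 1‖ := norm_pos_iff.mpr fun h => by
    have := congrArg re h
    simp at this
    linarith
  rw [norm_div, div_lt_one hp1, ← sq_lt_sq₀ (norm_nonneg _) hp1.le, ← normSq_eq_norm_sq,
    ← normSq_eq_norm_sq]
  simp only [normSq_apply, sub_re, add_re, sub_im, add_im, one_re, one_im]
  nlinarith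

lemma one_add_conj_mul_ne_zero {lam u : ℂ} (hlam : ‖lam‖ < 1) (hu : ‖u‖ ≤ 1) :
    1 + conj lam * u ≠ 0 := by
  simpa [sub_eq_add_neg, mul_comm] using
    one_sub_mul_ne_zero (x := -u) (y := conj lam) (by simpa using hu) (by simpa using hlam)

lemma norm_one_add_conj_mul_sq_sub_norm_add_sq (lam u : ℂ) :
    ‖1 + conj lam * u‖ ^ 2 - ‖u + lam‖ ^ 2 = (1 - ‖lam‖ ^ 2) * (1 - ‖u‖ ^ 2) := by
  simp only [← normSq_eq_norm_sq, ← ofReal_inj, ofReal_sub, ofReal_mul, ofReal_one, ← mul_conj,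
    map_add, map_mul, map_one, conj_conj]
  ring

lemma norm_dl_le_one {lam u : ℂ} (hlam : ‖lam‖ < 1) (hu : ‖u‖ ≤ 1) : ‖dl lam u‖ ≤ 1 := by
  have hden := norm_pos_iff.mpr (one_add_conj_mul_ne_zero hlam hu)
  rw [dl, norm_div, div_le_one hden, ← sq_le_sq₀ (norm_nonneg _) hden.le, ← sub_nonneg,
    norm_one_add_conj_mul_sq_sub_norm_add_sq]
  have : ‖lam‖ ^ 2 < 1 := by nlinarith [norm_nonneg lam]
  have : ‖u‖ ^ 2 ≤ 1 := by nlinarith [norm_nonneg u]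
  nlinarith

lemma dl_neg (lam v : ℂ) : dl (-lam) v = (v - lam) / (1 - conj lam * v) := by
  simp [dl, sub_eq_add_neg]

lemma dl_neg_dl {lam u : ℂ} (hlam : ‖lam‖ < 1) (hu : ‖u‖ ≤ 1) : dl (-lam) (dl lam u) = u := by
  have hden := one_add_conj_mul_ne_zero hlam hu
  have hden' : 1 + u * conj lam ≠ 0 := by rwa [mul_comm]
  have hlam' : 1 - lam * conj lam ≠ 0 := by
    rw [mul_conj, ← ofReal_one, ← ofReal_sub, ofReal_ne_zero, normSq_eq_norm_sq]
    nlinarith [norm_nonneg lam]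
  have hsub : dl lam u - lam = u * (1 - lam * conj lam) / (1 + conj lam * u) := by
    rw [dl]; field_simp; ring
  have hden_dl : 1 - conj lam * dl lam u = (1 - lam * conj lam) / (1 + conj lam * u) := by
    rw [dl]; field_simp; ring
  rw [dl_neg, hsub, hden_dl]
  field_simp

lemma dl_dl_neg {lam v : ℂ} (hlam : ‖lam‖ < 1) (hv : ‖v‖ ≤ 1) : dl lam (dl (-lam) v) = v := by
  simpa using dl_neg_dl (lam := -lam) (by rwa [norm_neg]) hv

lemma differentiableAt_dl {lam u : ℂ} (hlam : ‖lam‖ < 1) (hu : ‖u‖ ≤ 1) :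
    DifferentiableAt ℂ (dl lam) u := by
  have := one_add_conj_mul_ne_zero hlam hu
  unfold dl
  fun_prop (disch := assumption)

lemma dslope_smul_self {𝕜 E : Type*} [NontriviallyNormedField 𝕜] [NormedAddCommGroup E]
    [NormedSpace 𝕜 E] {g : 𝕜 → E} (hg : DifferentiableAt 𝕜 g 0) (x : 𝕜) :
    dslope (fun y => y • g y) 0 x = g x := by
  rcases eq_or_ne x 0 with rfl | hx
  · rw [dslope_same]
    simpa using ((hasDerivAt_id' (0 : 𝕜)).fun_smul hg.hasDerivAt).deriv
  · rw [dslope_of_ne _ hx, slope_def_module, sub_zero, zero_smul, sub_zero, smul_smul,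
      inv_mul_cancel₀ hx, one_smul]

lemma mapsTo_closedBall_of_norm_mul_self_le_one {ω : ℂ → ℂ}
    (hω : DifferentiableOn ℂ ω (ball 0 1)) (h : ∀ ζ ∈ ball (0 : ℂ) 1, ‖ζ * ω ζ‖ ≤ 1) :
    MapsTo ω (ball 0 1) (closedBall 0 1) := by
  have hd : DifferentiableOn ℂ (fun ζ => ζ • ω ζ) (ball 0 1) := differentiableOn_id.smul hω
  have hm : MapsTo (fun ζ => ζ • ω ζ) (ball 0 1) (closedBall ((0 : ℂ) • ω 0) 1) :=
    fun ζ hζ => by simpa using h ζ hζ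
  intro ζ hζ
  have := Complex.norm_dslope_le_div_of_mapsTo_ball hd hm hζ
  rw [dslope_smul_self (hω.differentiableAt (ball_mem_nhds 0 one_pos)), div_one] at this
  exact mem_closedBall_zero_iff.mpr this

lemma exists_eqOn_dl_of_norm_dl_neg_eq {ω : ℂ → ℂ} {lam z : ℂ} (hlam : ‖lam‖ < 1)
    (hωd : DifferentiableOn ℂ ω (ball 0 1)) (hωm : MapsTo ω (ball 0 1) (closedBall 0 1))
    (hω0 : ω 0 = lam) (hz : z ∈ ball (0 : ℂ) 1) (hz0 : z ≠ 0) (h : ‖dl (-lam) (ω z)‖ = ‖z‖) :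
    ∃ a : ℂ, ‖a‖ = 1 ∧ EqOn ω (fun ζ => dl lam (a * ζ)) (ball 0 1) := by
  have hlam' : ‖-lam‖ < 1 := by rwa [norm_neg]
  have hω1 : ∀ ζ ∈ ball (0 : ℂ) 1, ‖ω ζ‖ ≤ 1 := fun ζ hζ => mem_closedBall_zero_iff.mp (hωm hζ)
  set ψ : ℂ → ℂ := fun ζ => dl (-lam) (ω ζ)
  have hψ0 : ψ 0 = 0 := by simp [ψ, hω0, dl_neg]
  have hψd : DifferentiableOn ℂ ψ (ball 0 1) := fun ζ hζ =>
    (differentiableAt_dl hlam' (hω1 ζ hζ)).comp_differentiableWithinAt ζ (hωd ζ hζ)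
  have hψm : MapsTo ψ (ball 0 1) (closedBall (ψ 0) 1) := fun ζ hζ => by
    rw [hψ0, mem_closedBall_zero_iff]
    exact norm_dl_le_one hlam' (hω1 ζ hζ)
  have hslope : ‖dslope ψ 0 z‖ = 1 / 1 := by
    rw [dslope_of_ne _ hz0, slope_def_field, hψ0, sub_zero, sub_zero, norm_div, h,
      div_self (norm_ne_zero_iff.mpr hz0), div_one]
  obtain ⟨a, ha, hψa⟩ :=
    Complex.affine_of_mapsTo_ball_of_exists_norm_dslope_eq_div' hψd hψm ⟨z, hz, hslope⟩
  refine ⟨a, by rwa [div_one] at ha, fun ζ hζ => ?_⟩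
  have hψζ : ψ ζ = a * ζ := by simpa [hψ0, mul_comm] using hψa hζ
  show ω ζ = dl lam (a * ζ)
  rw [← hψζ, dl_dl_neg hlam (hω1 ζ hζ)]

lemma integral_radial_eq_sub {F Φ : ℂ → ℂ} {R : ℝ} (hF : ContinuousOn F (ball 0 R))
    (hΦ : ∀ w ∈ ball (0 : ℂ) R, HasDerivAt Φ (F w) w) {z : ℂ} (hz : z ∈ ball (0 : ℂ) R) :
    ∫ t in (0 : ℝ)..1, F (t * z) * z = Φ z - Φ 0 := by
  have hseg : ∀ t ∈ uIcc (0 : ℝ) 1, (t : ℂ) * z ∈ ball (0 : ℂ) R := fun t ht => by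
    rw [uIcc_of_le zero_le_one] at ht
    rw [mem_ball_zero_iff, norm_mul, Complex.norm_real, Real.norm_of_nonneg ht.1]
    exact (mul_le_of_le_one_left (norm_nonneg z) ht.2).trans_lt (mem_ball_zero_iff.mp hz)
  have hderiv : ∀ t ∈ uIcc (0 : ℝ) 1, HasDerivAt (fun s : ℝ => Φ (s * z)) (F (t * z) * z) t :=
    fun t ht => ((hΦ _ (hseg t ht)).comp (t : ℂ) (hasDerivAt_mul_const z)).comp_ofReal
  have hcont : ContinuousOn (fun t : ℝ => F (t * z) * z) (uIcc 0 1) :=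
    (hF.comp (by fun_prop) hseg).mul continuousOn_const
  rw [integral_eq_sub_of_hasDerivAt hderiv hcont.intervalIntegrable]
  simp

lemma hasDerivAt_integral_radial {F : ℂ → ℂ} {R : ℝ} (hF : DifferentiableOn ℂ F (ball 0 R))
    {z : ℂ} (hz : z ∈ ball (0 : ℂ) R) :
    HasDerivAt (fun w => ∫ t in (0 : ℝ)..1, F (t * w) * w) (F z) z := by
  obtain ⟨Φ, hΦ⟩ := hF.isExactOn_ball
  refine ((hΦ z hz).sub_const (Φ 0)).congr_of_eventuallyEq ?_
  filter_upwards [isOpen_ball.mem_nhds hz] with w hw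
  exact integral_radial_eq_sub hF.continuousOn hΦ hw

noncomputable def logDerivForm (z w : ℂ) : ℂ := (w - 1) / ((1 - w * z) * (1 - z))

lemma differentiableOn_logDerivForm_dl {lam a : ℂ} (hlam : ‖lam‖ < 1) (ha : ‖a‖ ≤ 1) :
    DifferentiableOn ℂ (fun ζ => logDerivForm ζ (dl lam (a * ζ))) (ball 0 1) := fun ζ hζ => by
  have hζ1 := mem_ball_zero_iff.mp hζ
  have haζ : ‖a * ζ‖ ≤ 1 := by
    rw [norm_mul]
    exact mul_le_one₀ ha (norm_nonneg ζ) hζ1.le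
  have := mul_ne_zero (one_sub_mul_ne_zero (norm_dl_le_one hlam haζ) hζ1)
    (one_sub_ne_zero_of_norm_lt_one_s8 hζ1)
  have := (differentiableAt_dl hlam haζ).comp ζ (differentiableAt_id.const_mul a)
  refine DifferentiableAt.differentiableWithinAt ?_
  unfold logDerivForm
  fun_prop (disch := assumption)

lemma hasDerivAt_Hlog (μ : ℂ) {lam a z : ℂ} (hlam : ‖lam‖ < 1) (ha : ‖a‖ ≤ 1)
    (hz : z ∈ ball (0 : ℂ) 1) :
    HasDerivAt (Hlog μ lam a) (μ / π * logDerivForm z (dl lam (a * z))) z :=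
  (hasDerivAt_integral_radial (differentiableOn_logDerivForm_dl hlam ha) hz).const_mul _

lemma logDeriv_Hfun (μ : ℂ) {lam a z : ℂ} (hlam : ‖lam‖ < 1) (ha : ‖a‖ ≤ 1)
    (hz : z ∈ ball (0 : ℂ) 1) :
    logDeriv (Hfun μ lam a) z = μ / π * logDerivForm z (dl lam (a * z)) := by
  have hd : HasDerivAt (Hfun μ lam a)
      (Hfun μ lam a z * (μ / π * logDerivForm z (dl lam (a * z)))) z :=
    (hasDerivAt_Hlog μ hlam ha hz).cexp
  rw [logDeriv_apply, hd.deriv]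
  exact mul_div_cancel_left₀ _ (Complex.exp_ne_zero _)

lemma eqOn_Hfun_of_logDeriv_eq {μ lam a : ℂ} {f : ℂ → ℂ} (hlam : ‖lam‖ < 1) (ha : ‖a‖ ≤ 1)
    (hfd : DifferentiableOn ℂ f (ball 0 1)) (hf0 : ∀ ζ ∈ ball (0 : ℂ) 1, f ζ ≠ 0) (hf1 : f 0 = 1)
    (h : ∀ ζ ∈ ball (0 : ℂ) 1, logDeriv f ζ = μ / π * logDerivForm ζ (dl lam (a * ζ))) :
    EqOn f (Hfun μ lam a) (ball 0 1) := by
  have hHd : DifferentiableOn ℂ (Hfun μ lam a) (ball 0 1) := fun ζ hζ =>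
    (hasDerivAt_Hlog μ hlam ha hζ).cexp.differentiableAt.differentiableWithinAt
  obtain ⟨c, -, hc⟩ := (logDeriv_eqOn_iff hfd hHd isOpen_ball (convex_ball 0 1).isPreconnected
    (fun _ _ => Complex.exp_ne_zero _) hf0).mp fun ζ hζ => by
      rw [h ζ hζ, logDeriv_Hfun μ hlam ha hζ]
  have hc1 : c = 1 := by
    simpa [hf1, Hfun, Hlog] using (hc (mem_ball_self one_pos)).symm
  simpa [hc1] using hc

lemma norm_logDerivForm_sub_cfun_sq_sub_rfun_sq {z lam w : ℂ} (h1 : 1 - z ≠ 0)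
    (h2 : 1 - w * z ≠ 0) (h3 : 1 - ‖z‖ ^ 2 ≠ 0) (h4 : 1 + ‖z‖ ^ 2 - 2 * (lam * z).re ≠ 0) :
    ‖logDerivForm z w - cfun z lam‖ ^ 2 - rfun z lam ^ 2 =
      (‖w - lam‖ ^ 2 - ‖z‖ ^ 2 * ‖1 - conj lam * w‖ ^ 2) /
        (‖1 - w * z‖ ^ 2 * (1 - ‖z‖ ^ 2) * (1 + ‖z‖ ^ 2 - 2 * (lam * z).re)) := by
  have hre : ((lam * z).re : ℂ) = (lam * z + conj lam * conj z) / 2 := by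
    rw [re_eq_add_conj, map_mul]
  have hsq (x : ℂ) : (‖x‖ : ℂ) ^ 2 = x * conj x := by
    rw [mul_conj, normSq_eq_norm_sq, ofReal_pow]
  have h1' : 1 - conj z ≠ 0 := by
    rw [← map_one conj, ← map_sub]
    exact (map_ne_zero _).mpr h1
  have h2' : 1 - conj z * conj w ≠ 0 := by
    rw [← map_mul, mul_comm, ← map_one conj, ← map_sub]
    exact (map_ne_zero _).mpr h2
  have h3' : 1 - z * conj z ≠ 0 := by
    rw [← hsq]
    exact_mod_cast h3
  have hA : 1 + z * conj z - (z * lam + conj z * conj lam) ≠ 0 := by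
    have : ((1 + ‖z‖ ^ 2 - 2 * (lam * z).re : ℝ) : ℂ) ≠ 0 := by exact_mod_cast h4
    push_cast at this
    rw [hre, hsq] at this
    convert this using 1
    ring
  -- `field_simp` meets this denominator in both orders
  have hA' : 1 + z * conj z - (conj z * conj lam + z * lam) ≠ 0 := by
    convert hA using 1
    ring
  rw [rfun, div_pow, mul_pow, ← ofReal_inj]
  simp only [logDerivForm, cfun, ofReal_sub, ofReal_div, ofReal_mul, ofReal_pow, ofReal_add,
    ofReal_one, ofReal_ofNat, hsq, hre, map_sub, map_div₀, map_mul, map_add, map_one, map_ofNat,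
    conj_conj]
  field_simp
  ring

lemma one_add_norm_sq_sub_two_re_mul_pos {lam z : ℂ} (hlam : ‖lam‖ ≤ 1) (hz : ‖z‖ < 1) :
    0 < 1 + ‖z‖ ^ 2 - 2 * (lam * z).re := by
  have h : (lam * z).re ≤ ‖z‖ := (re_le_norm _).trans <| by
    rw [norm_mul]
    exact mul_le_of_le_one_left (norm_nonneg z) hlam
  nlinarith

lemma norm_logDerivForm_sub_cfun_eq_rfun_iff {z lam w : ℂ} (hz : ‖z‖ < 1) (hlam : ‖lam‖ < 1)
    (hw : ‖w‖ ≤ 1) : ‖logDerivForm z w - cfun z lam‖ = rfun z lam ↔ ‖dl (-lam) w‖ = ‖z‖ := by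
  have hA := one_add_norm_sq_sub_two_re_mul_pos hlam.le hz
  have hz2 : 0 < 1 - ‖z‖ ^ 2 := by nlinarith [norm_nonneg z]
  have hlam2 : 0 ≤ 1 - ‖lam‖ ^ 2 := by nlinarith [norm_nonneg lam]
  have hwz : 1 - w * z ≠ 0 := one_sub_mul_ne_zero hw hz
  have hden : 0 < ‖1 - w * z‖ ^ 2 * (1 - ‖z‖ ^ 2) * (1 + ‖z‖ ^ 2 - 2 * (lam * z).re) := by
    have := norm_pos_iff.mpr hwz
    positivity
  have hr : 0 ≤ rfun z lam := by
    unfold rfun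
    positivity
  have hlw : 1 - conj lam * w ≠ 0 := by
    simpa [sub_eq_add_neg] using one_add_conj_mul_ne_zero (lam := -lam) (by rwa [norm_neg]) hw
  rw [← sq_eq_sq₀ (norm_nonneg _) hr, ← sub_eq_zero, norm_logDerivForm_sub_cfun_sq_sub_rfun_sq
    (one_sub_ne_zero_of_norm_lt_one_s8 hz) hwz hz2.ne' hA.ne', div_eq_zero_iff, or_iff_left hden.ne',
    sub_eq_zero, ← mul_pow, sq_eq_sq₀ (norm_nonneg _) (by positivity), dl_neg, norm_div,
    div_eq_iff (norm_ne_zero_iff.mpr hlw)]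

lemma eq_mul_logDerivForm_of_cayley {μ ζ w L : ℂ} (hμ : μ ≠ 0) (hζ : 1 - ζ ≠ 0)
    (hwζ : 1 - w * ζ ≠ 0)
    (h : w * (2 * π / μ * (ζ * L) + (1 + ζ) / (1 - ζ) + 1) = 2 * π / μ * L + 2 / (1 - ζ)) :
    L = μ / π * logDerivForm ζ w := by
  have hπ : (π : ℂ) ≠ 0 := Complex.ofReal_ne_zero.mpr Real.pi_ne_zero
  rw [logDerivForm]
  field_simp at h ⊢
  linear_combination -h / 2

lemma memF.exists_schwarzFunction {μ : ℂ} {f : ℂ → ℂ} (hμ : μ ≠ 0) (hf : memF μ f) :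
    ∃ ω : ℂ → ℂ, DifferentiableOn ℂ ω unitDisk ∧ MapsTo ω unitDisk (closedBall 0 1) ∧
      ∀ ζ ∈ unitDisk, logDeriv f ζ = μ / π * logDerivForm ζ (ω ζ) := by
  obtain ⟨hfa, hfne, -, hre⟩ := hf
  have hP1 : ∀ ζ ∈ unitDisk, Pfun μ f ζ + 1 ≠ 0 := fun ζ hζ h => by
    have h' := congrArg re h
    simp only [add_re, one_re, zero_re] at h'
    linarith [hre ζ hζ]
  have hζ1 : ∀ ζ ∈ unitDisk, 1 - ζ ≠ 0 := fun ζ hζ =>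
    one_sub_ne_zero_of_norm_lt_one_s8 (mem_ball_zero_iff.mp hζ)
  set ω : ℂ → ℂ := fun ζ => (2 * π / μ * logDeriv f ζ + 2 / (1 - ζ)) / (Pfun μ f ζ + 1)
  have hωd : DifferentiableOn ℂ ω unitDisk := fun ζ hζ => by
    have := (hfa ζ hζ).differentiableAt
    have := (hfa.deriv ζ hζ).differentiableAt
    have := hζ1 ζ hζ
    have := hP1 ζ hζ
    have := hfne ζ hζ
    refine DifferentiableAt.differentiableWithinAt ?_
    simp only [ω, Pfun, logDeriv_apply] at *
    fun_prop (disch := assumption)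
  -- `ζ ω(ζ)` is the Cayley transform `(P_f - 1)/(P_f + 1)`, and `Re P_f > 0`
  have hζω : ∀ ζ ∈ unitDisk, ‖ζ * ω ζ‖ ≤ 1 := fun ζ hζ => by
    have hPQ : Pfun μ f ζ - 1 = ζ * (2 * π / μ * logDeriv f ζ + 2 / (1 - ζ)) := by
      have := hζ1 ζ hζ
      rw [Pfun, logDeriv_apply]
      field_simp
      ring
    simpa only [ω, mul_div_assoc', ← hPQ] using (norm_sub_one_div_add_one_lt_one (hre ζ hζ)).le
  have hωm := mapsTo_closedBall_of_norm_mul_self_le_one hωd hζω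
  refine ⟨ω, hωd, hωm, fun ζ hζ => eq_mul_logDerivForm_of_cayley hμ (hζ1 ζ hζ)
    (one_sub_mul_ne_zero (mem_closedBall_zero_iff.mp (hωm hζ)) (mem_ball_zero_iff.mp hζ)) ?_⟩
  have hP : Pfun μ f ζ = 2 * π / μ * (ζ * logDeriv f ζ) + (1 + ζ) / (1 - ζ) := by
    rw [Pfun, logDeriv_apply, mul_div_assoc ζ]
  rw [← hP]
  exact div_mul_cancel₀ _ (hP1 ζ hζ)

lemma memFlam.exists_schwarzFunction {μ lam : ℂ} {f : ℂ → ℂ} (hμ : μ ≠ 0)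
    (hf : memFlam μ lam f) :
    ∃ ω : ℂ → ℂ, DifferentiableOn ℂ ω unitDisk ∧ MapsTo ω unitDisk (closedBall 0 1) ∧
      ω 0 = lam ∧ ∀ ζ ∈ unitDisk, logDeriv f ζ = μ / π * logDerivForm ζ (ω ζ) := by
  obtain ⟨ω, hωd, hωm, hω⟩ := hf.1.exists_schwarzFunction hμ
  refine ⟨ω, hωd, hωm, ?_, hω⟩
  have h0 := hω 0 (mem_ball_self one_pos)
  have hμπ : μ / π ≠ 0 := div_ne_zero hμ (Complex.ofReal_ne_zero.mpr Real.pi_ne_zero)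
  rw [logDeriv_apply, hf.2, hf.1.2.2.1, logDerivForm, div_one, mul_zero, sub_zero,
    mul_one, div_one, mul_right_inj' hμπ] at h0
  exact (sub_left_inj.mp h0).symm

theorem stmt8 (μ lam : ℂ) (hμ : 0 < μ.re) (hlam : ‖lam‖ < 1)
    (f : ℂ → ℂ) (hf : memFlam μ lam f) (z : ℂ) (hz : z ∈ unitDisk) (hz0 : z ≠ 0) :
    ‖deriv f z / f z - μ / (Real.pi : ℂ) * cfun z lam‖ =
        ‖μ‖ / Real.pi * rfun z lam ↔
      ∃ θ : ℝ, ∀ w ∈ unitDisk, f w = Hfun μ lam (Complex.exp (θ * Complex.I)) w := by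
  have hz1 : ‖z‖ < 1 := mem_ball_zero_iff.mp hz
  obtain ⟨ω, hωd, hωm, hω0, hfω⟩ := hf.exists_schwarzFunction (ne_zero_of_re_pos hμ)
  have key : ∀ w, ‖w‖ ≤ 1 → (‖μ / π * logDerivForm z w - μ / π * cfun z lam‖ =
      ‖μ‖ / π * rfun z lam ↔ ‖dl (-lam) w‖ = ‖z‖) := fun w hw => by
    rw [← mul_sub, norm_mul, norm_div, norm_real, Real.norm_of_nonneg Real.pi_pos.le,
      mul_right_inj' (div_pos (norm_pos_iff.mpr (ne_zero_of_re_pos hμ)) Real.pi_pos).ne',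
      norm_logDerivForm_sub_cfun_eq_rfun_iff hz1 hlam hw]
  rw [← logDeriv_apply]
  constructor
  · intro h
    rw [hfω z hz, key _ (mem_closedBall_zero_iff.mp (hωm hz))] at h
    obtain ⟨a, ha, hωa⟩ := exists_eqOn_dl_of_norm_dl_neg_eq hlam hωd hωm hω0 hz hz0 h
    obtain ⟨θ, rfl⟩ := (norm_eq_one_iff a).mp ha
    refine ⟨θ, eqOn_Hfun_of_logDeriv_eq hlam ha.le hf.1.1.differentiableOn hf.1.2.1 hf.1.2.2.1
      fun ζ hζ => ?_⟩
    rw [hfω ζ hζ, hωa hζ]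
  · rintro ⟨θ, hθ⟩
    have ha : ‖Complex.exp (θ * Complex.I)‖ = 1 := norm_exp_ofReal_mul_I θ
    have haz : ‖Complex.exp (θ * Complex.I) * z‖ ≤ 1 := by
      rw [norm_mul, ha, one_mul]
      exact hz1.le
    rw [(logDeriv_congr_nhds (eventuallyEq_of_mem (isOpen_ball.mem_nhds hz) hθ)).eq_of_nhds,
      logDeriv_Hfun μ hlam ha.le hz, key _ (norm_dl_le_one hlam haz), dl_neg_dl hlam haz,
      norm_mul, ha, one_mul]
end

section
/- Let |λ| < 1 and define h(z) = 2·∫₀^z ζ/(1 − λζ)² dζ for z ∈ D. Then h is analytic on D with a zero of order two at the origin (h(z) = z² + higher order terms), it satisfies Re(1 + z h''(z)/h'(z)) > 0 for all z ∈ D, and h(z₀) ≠ 0 for every z₀ ∈ D \ {0}. -/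
open Complex Set Metric

/-- `h(z) = 2·∫₀^z ζ/(1 − λζ)² dζ` (integral over the segment from `0` to `z`). -/
noncomputable def hcur (lam z : ℂ) : ℂ :=
  2 * ∫ t in (0:ℝ)..1, t * z / (1 - lam * (t * z)) ^ 2 * z


/-!
The segment integral `z ↦ ∫₀¹ f(tz) z dt` of a function holomorphic on a disc about `0` is a
primitive of `f` there, because `f` has some primitive on the disc. Hence `h'(z) = 2z/(1 - λz)²`,
`h''(z) = 2(1 + λz)/(1 - λz)³`, and `1 + z h''/h' = 2/(1 - λz)`, which has positive real part.

For the zeros write `h(z) = 2z² ∫₀¹ t/(1 - wt)² dt` with `w = λz`. Since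
`t/(1 - wt)² - (1 - t)/((1 - w)(1 - wt))` is the derivative of `(t² - t)/((1 - w)(1 - wt))`,
which vanishes at `t = 0, 1`, the integral equals `(1 - w)⁻¹ ∫₀¹ (1 - t)/(1 - wt) dt`, and the
last integrand has positive real part for `0 < t < 1`.
-/

open intervalIntegral
open MeasureTheory (volume)

theorem hasDerivAt_integral_segment {f : ℂ → ℂ} {r : ℝ}
    (hf : DifferentiableOn ℂ f (ball 0 r)) {z : ℂ} (hz : z ∈ ball 0 r) :
    HasDerivAt (fun w : ℂ => ∫ t in (0:ℝ)..1, f (t * w) * w) (f z) z := by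
  obtain ⟨F, hF⟩ := hf.isExactOn_ball
  have segment_mem {w : ℂ} (hw : w ∈ ball 0 r) {t : ℝ} (ht : t ∈ uIcc (0:ℝ) 1) :
      (t : ℂ) * w ∈ ball 0 r := by
    rw [uIcc_of_le zero_le_one] at ht
    rw [mem_ball_zero_iff] at hw ⊢
    calc ‖(t : ℂ) * w‖ = |t| * ‖w‖ := by rw [norm_mul, norm_real, Real.norm_eq_abs]
      _ ≤ 1 * ‖w‖ := by gcongr; exact abs_le.2 ⟨by linarith [ht.1], ht.2⟩
      _ < r := by rwa [one_mul]
  have integral_eq : ∀ w ∈ ball (0 : ℂ) r, ∫ t in (0:ℝ)..1, f (t * w) * w = F w - F 0 := by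
    intro w hw
    have := integral_eq_sub_of_hasDerivAt (a := 0) (b := 1) (f := fun t : ℝ => F (t * w))
      (f' := fun t : ℝ => f (t * w) * w)
      (fun t ht => ((hF _ (segment_mem hw ht)).comp (t : ℂ) (hasDerivAt_mul_const w)).comp_ofReal)
      (ContinuousOn.intervalIntegrable <| .mul (hf.continuousOn.comp (by fun_prop)
        fun t ht => segment_mem hw ht) continuousOn_const)
    simpa using this
  refine ((hF z hz).sub_const (F 0)).congr_of_eventuallyEq ?_
  filter_upwards [isOpen_ball.mem_nhds hz] with w hw
  exact integral_eq w hw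

theorem re_one_sub_mul_ofReal_pos {w : ℂ} (hw : w.re < 1) {t : ℝ} (ht : t ∈ Icc (0:ℝ) 1) :
    0 < (1 - w * t).re := by
  have : (1 - w * t).re = 1 - w.re * t := by simp
  rw [this]
  rcases le_or_gt w.re 0 with h | h <;> nlinarith [ht.1, ht.2]

theorem one_sub_mul_ofReal_ne_zero {w : ℂ} (hw : w.re < 1) {t : ℝ} (ht : t ∈ uIcc (0:ℝ) 1) :
    1 - w * t ≠ 0 := by
  rw [uIcc_of_le zero_le_one] at ht
  exact fun h => (re_one_sub_mul_ofReal_pos hw ht).ne' (by rw [h, zero_re])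

theorem integral_div_one_sub_mul_sq {w : ℂ} (hw : w.re < 1) :
    ∫ t in (0:ℝ)..1, (t : ℂ) / (1 - w * t) ^ 2
      = (1 - w)⁻¹ * ∫ t in (0:ℝ)..1, (1 - (t : ℂ)) / (1 - w * t) := by
  have hne {t : ℝ} (ht : t ∈ uIcc (0:ℝ) 1) : 1 - w * t ≠ 0 := one_sub_mul_ofReal_ne_zero hw ht
  have h1w : 1 - w ≠ 0 := by simpa using hne (t := 1) (by simp)
  have hderiv : ∀ t ∈ uIcc (0:ℝ) 1,
      HasDerivAt (fun t : ℝ => ((t : ℂ) ^ 2 - t) / ((1 - w) * (1 - w * t)))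
        ((t : ℂ) / (1 - w * t) ^ 2 - (1 - w)⁻¹ * ((1 - (t : ℂ)) / (1 - w * t))) t := by
    intro t ht
    have h_num : HasDerivAt (fun ζ : ℂ => ζ ^ 2 - ζ) (2 * t - 1) (t : ℂ) := by
      simpa using (hasDerivAt_pow 2 (t : ℂ)).fun_sub (hasDerivAt_id (t : ℂ))
    have h_den : HasDerivAt (fun ζ : ℂ => (1 - w) * (1 - w * ζ)) ((1 - w) * -w) (t : ℂ) := by
      simpa using (((hasDerivAt_id (t : ℂ)).const_mul w).const_sub 1).const_mul (1 - w)
    refine ((h_num.fun_div h_den (mul_ne_zero h1w (hne ht))).comp_ofReal (z := t)).congr_deriv ?_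
    field_simp [hne ht]
    ring
  have hint₁ : IntervalIntegrable (fun t : ℝ => (t : ℂ) / (1 - w * t) ^ 2) volume 0 1 :=
    (ContinuousOn.div (by fun_prop) (by fun_prop) fun t ht =>
      pow_ne_zero 2 (hne ht)).intervalIntegrable
  have hint₂ : IntervalIntegrable (fun t : ℝ => (1 - (t : ℂ)) / (1 - w * t)) volume 0 1 :=
    (ContinuousOn.div (by fun_prop) (by fun_prop) fun t ht => hne ht).intervalIntegrable
  have key := integral_eq_sub_of_hasDerivAt hderiv (hint₁.sub (hint₂.const_mul _))
  rw [integral_sub hint₁ (hint₂.const_mul _), integral_const_mul] at key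
  simpa [sub_eq_zero] using key

theorem Complex.re_inv_pos_of_re_pos {z : ℂ} (hz : 0 < z.re) : 0 < z⁻¹.re := by
  rw [inv_re]
  exact div_pos hz (normSq_pos.2 fun h => hz.ne' (by rw [h, zero_re]))

theorem re_integral_one_sub_div_one_sub_mul_pos {w : ℂ} (hw : w.re < 1) :
    0 < (∫ t in (0:ℝ)..1, (1 - (t : ℂ)) / (1 - w * t)).re := by
  have hcont : ContinuousOn (fun t : ℝ => (1 - (t : ℂ)) / (1 - w * t)) (uIcc 0 1) :=
    ContinuousOn.div (by fun_prop) (by fun_prop) fun t ht => one_sub_mul_ofReal_ne_zero hw ht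
  rw [← RCLike.re_to_complex, ← intervalIntegral_re hcont.intervalIntegrable]
  refine intervalIntegral_pos_of_pos_on
    (continuous_re.comp_continuousOn hcont).intervalIntegrable (fun t ht => ?_) zero_lt_one
  have : (1 - (t : ℂ)) / (1 - w * t) = ((1 - t : ℝ) : ℂ) * (1 - w * t)⁻¹ := by
    push_cast; rfl
  rw [RCLike.re_to_complex, this, re_ofReal_mul]
  exact mul_pos (sub_pos.2 ht.2)
    (re_inv_pos_of_re_pos (re_one_sub_mul_ofReal_pos hw (Ioo_subset_Icc_self ht)))

theorem integral_div_one_sub_mul_sq_ne_zero {w : ℂ} (hw : w.re < 1) :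
    ∫ t in (0:ℝ)..1, (t : ℂ) / (1 - w * t) ^ 2 ≠ 0 := by
  rw [integral_div_one_sub_mul_sq hw]
  refine mul_ne_zero (inv_ne_zero fun h => ?_) fun h => ?_
  · exact (re_one_sub_mul_ofReal_pos hw (t := 1) (by simp)).ne' (by simp [h])
  · exact (re_integral_one_sub_div_one_sub_mul_pos hw).ne' (by rw [h, zero_re])

theorem hasDerivAt_two_mul_div_one_sub_mul_sq {lam z : ℂ} (hz : 1 - lam * z ≠ 0) :
    HasDerivAt (fun w : ℂ => 2 * w / (1 - lam * w) ^ 2)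
      (2 * (1 + lam * z) / (1 - lam * z) ^ 3) z := by
  have h_den : HasDerivAt (fun w : ℂ => (1 - lam * w) ^ 2) (2 * (1 - lam * z) * -lam) z := by
    simpa using (((hasDerivAt_id z).const_mul lam).const_sub 1).fun_pow 2
  refine (((hasDerivAt_id' z).const_mul 2).fun_div h_den (pow_ne_zero 2 hz)).congr_deriv ?_
  field_simp
  ring

section hcur

variable {lam : ℂ}

theorem re_mul_lt_one_of_mem_unitDisk (hlam : ‖lam‖ ≤ 1) {z : ℂ} (hz : z ∈ unitDisk) :
    (lam * z).re < 1 := by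
  rw [unitDisk, mem_ball_zero_iff] at hz
  calc (lam * z).re ≤ ‖lam‖ * ‖z‖ := (re_le_norm _).trans (norm_mul _ _).le
    _ < 1 := by nlinarith [norm_nonneg z]

theorem one_sub_mul_ne_zero_of_mem_unitDisk (hlam : ‖lam‖ ≤ 1) {z : ℂ} (hz : z ∈ unitDisk) :
    1 - lam * z ≠ 0 := fun h => by
  simpa [← sub_eq_zero.1 h] using re_mul_lt_one_of_mem_unitDisk hlam hz

theorem hasDerivAt_hcur (hlam : ‖lam‖ ≤ 1) {z : ℂ} (hz : z ∈ unitDisk) :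
    HasDerivAt (hcur lam) (2 * z / (1 - lam * z) ^ 2) z := by
  have hdiff : DifferentiableOn ℂ (fun ζ : ℂ => ζ / (1 - lam * ζ) ^ 2) unitDisk :=
    differentiableOn_id.div (by fun_prop) fun ζ hζ =>
      pow_ne_zero 2 (one_sub_mul_ne_zero_of_mem_unitDisk hlam hζ)
  exact ((hasDerivAt_integral_segment hdiff hz).const_mul 2).congr_deriv (mul_div_assoc ..).symm

theorem deriv_hcur (hlam : ‖lam‖ ≤ 1) {z : ℂ} (hz : z ∈ unitDisk) :
    deriv (hcur lam) z = 2 * z / (1 - lam * z) ^ 2 :=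
  (hasDerivAt_hcur hlam hz).deriv

theorem deriv_deriv_hcur (hlam : ‖lam‖ ≤ 1) {z : ℂ} (hz : z ∈ unitDisk) :
    deriv (deriv (hcur lam)) z = 2 * (1 + lam * z) / (1 - lam * z) ^ 3 := by
  have hev : deriv (hcur lam) =ᶠ[nhds z] fun w => 2 * w / (1 - lam * w) ^ 2 := by
    filter_upwards [isOpen_ball.mem_nhds hz] with w hw using deriv_hcur hlam hw
  rw [hev.deriv_eq]
  exact (hasDerivAt_two_mul_div_one_sub_mul_sq
    (one_sub_mul_ne_zero_of_mem_unitDisk hlam hz)).deriv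

theorem analyticOnNhd_hcur (hlam : ‖lam‖ ≤ 1) : AnalyticOnNhd ℂ (hcur lam) unitDisk :=
  DifferentiableOn.analyticOnNhd
    (fun _ hz => (hasDerivAt_hcur hlam hz).differentiableAt.differentiableWithinAt) isOpen_ball

theorem one_add_mul_deriv_deriv_hcur_div (hlam : ‖lam‖ ≤ 1) {z : ℂ} (hz : z ∈ unitDisk)
    (hz0 : z ≠ 0) :
    1 + z * deriv (deriv (hcur lam)) z / deriv (hcur lam) z = 2 / (1 - lam * z) := by
  have hne := one_sub_mul_ne_zero_of_mem_unitDisk hlam hz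
  rw [deriv_hcur hlam hz, deriv_deriv_hcur hlam hz, mul_comm lam z] at *
  field_simp
  ring

theorem hcur_eq_sq_mul_integral (z : ℂ) :
    hcur lam z = 2 * z ^ 2 * ∫ t in (0:ℝ)..1, (t : ℂ) / (1 - lam * z * t) ^ 2 := by
  rw [hcur, mul_assoc, ← integral_const_mul (z ^ 2)]
  congr 1
  refine intervalIntegral.integral_congr fun (t : ℝ) _ => ?_
  ring

end hcur

theorem stmt16 (lam : ℂ) (hlam : ‖lam‖ < 1) :
    AnalyticOnNhd ℂ (hcur lam) unitDisk ∧
    hcur lam 0 = 0 ∧ deriv (hcur lam) 0 = 0 ∧ deriv (deriv (hcur lam)) 0 = 2 ∧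
    (∀ z ∈ unitDisk, 0 < (1 + z * deriv (deriv (hcur lam)) z / deriv (hcur lam) z).re) ∧
    ∀ z₀ ∈ unitDisk, z₀ ≠ 0 → hcur lam z₀ ≠ 0 := by
  have hlam' := hlam.le
  have h0 : (0 : ℂ) ∈ unitDisk := mem_ball_self one_pos
  refine ⟨analyticOnNhd_hcur hlam', by simp [hcur], by simp [deriv_hcur hlam' h0],
    by simp [deriv_deriv_hcur hlam' h0], fun z hz => ?_, fun z hz hz0 => ?_⟩
  · rcases eq_or_ne z 0 with rfl | hz0
    · simp
    rw [one_add_mul_deriv_deriv_hcur_div hlam' hz hz0, div_eq_mul_inv, ← ofReal_ofNat,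
      re_ofReal_mul]
    have := re_mul_lt_one_of_mem_unitDisk hlam' hz
    exact mul_pos two_pos (re_inv_pos_of_re_pos (by simpa using this))
  · rw [hcur_eq_sq_mul_integral]
    exact mul_ne_zero (mul_ne_zero two_ne_zero (pow_ne_zero 2 hz0))
      (integral_div_one_sub_mul_sq_ne_zero (re_mul_lt_one_of_mem_unitDisk hlam' hz))
end
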